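/- Let k ≥ 0, n = k+1, and a, b ∈ ℂ^n, and let p(x,y) = Σ_{i=0}^k x^{k-i} y^i. Then det([p(a_r,b_s)]_{r,s=1}^n) = (-1)^{C(k+1,2)} · Π_{1≤i<j≤n}(a_j - a_i) · Π_{1≤i<j≤n}(b_j - b_i). -/

import Mathlib

/-!
The matrix factors as `(a r ^ (k - i))_{r,i} * ((b s ^ i)_{s,i})ᵀ`. The second factor is a
Vandermonde matrix; the first is the projective Vandermonde matrix with rows
`(a r ^ k, …, a r, 1)`, whose determinant is `∏_{i<j} (a i - a j)`. Flipping each of these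
`C(k+1, 2)` factors produces the sign.
-/

open Finset Matrix

lemma Finset.sum_card_Ioi_eq_choose_two {α : Type*} [Fintype α] [LinearOrder α]
    [LocallyFiniteOrderTop α] : ∑ i : α, #(Ioi i) = (Fintype.card α).choose 2 := by
  rw [← Fintype.card_product_filter_lt, card_filter, Fintype.sum_prod_type]
  refine sum_congr rfl fun i _ => ?_
  rw [← card_filter]
  congr 1
  ext j
  simp

lemma Finset.prod_ite_lt_eq_prod_Ioi {α M : Type*} [Fintype α] [LinearOrder α]
    [LocallyFiniteOrderTop α] [CommMonoid M] (f : α → α → M) :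
    (∏ i, ∏ j, if i < j then f i j else 1) = ∏ i, ∏ j ∈ Ioi i, f i j := by
  refine prod_congr rfl fun i _ => ?_
  rw [← prod_filter]
  congr 1
  ext j
  simp

lemma Finset.prod_prod_Ioi_sub_comm {α R : Type*} [Fintype α] [LinearOrder α]
    [LocallyFiniteOrderTop α] [CommRing R] (v : α → R) :
    ∏ i, ∏ j ∈ Ioi i, (v i - v j) =
      (-1) ^ (Fintype.card α).choose 2 * ∏ i, ∏ j ∈ Ioi i, (v j - v i) := by
  have h (i j : α) : v i - v j = -1 * (v j - v i) := by ring
  rw [← sum_card_Ioi_eq_choose_two, ← prod_pow_eq_pow_sum, ← prod_mul_distrib]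
  exact prod_congr rfl fun i _ => by simp only [h i, prod_mul_distrib, prod_const]

namespace Matrix

variable {R : Type*} [CommRing R] {n : ℕ}

lemma det_projVandermonde_one_left (v : Fin n → R) :
    (projVandermonde 1 v).det = (-1) ^ n.choose 2 * ∏ i, ∏ j ∈ Ioi i, (v j - v i) := by
  simpa [det_projVandermonde] using prod_prod_Ioi_sub_comm v

lemma of_sum_pow_mul_pow_eq_projVandermonde_mul (k : ℕ) (a b : Fin (k + 1) → R) :
    (of fun r s => ∑ i ∈ range (k + 1), a r ^ (k - i) * b s ^ i) =
      projVandermonde 1 a * (vandermonde b)ᵀ := by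
  ext r s
  simp [mul_apply, projVandermonde_apply,
    ← Fin.sum_univ_eq_sum_range fun i => a r ^ (k - i) * b s ^ i]

lemma det_of_sum_pow_mul_pow (k : ℕ) (a b : Fin (k + 1) → R) :
    (of fun r s => ∑ i ∈ range (k + 1), a r ^ (k - i) * b s ^ i).det =
      (-1) ^ (k + 1).choose 2 * (∏ i, ∏ j ∈ Ioi i, (a j - a i)) *
        ∏ i, ∏ j ∈ Ioi i, (b j - b i) := by
  rw [of_sum_pow_mul_pow_eq_projVandermonde_mul, det_mul, det_transpose,
    det_projVandermonde_one_left, det_vandermonde]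

end Matrix

theorem stmt_7 (k : ℕ) (a b : Fin (k + 1) → ℂ) :
    Matrix.det (Matrix.of fun r s : Fin (k + 1) =>
        ∑ i ∈ Finset.range (k + 1), a r ^ (k - i) * b s ^ i) =
      (-1 : ℂ) ^ ((k + 1).choose 2) *
        (∏ i : Fin (k + 1), ∏ j : Fin (k + 1), if i < j then a j - a i else 1) *
        (∏ i : Fin (k + 1), ∏ j : Fin (k + 1), if i < j then b j - b i else 1) := by
  rw [det_of_sum_pow_mul_pow, prod_ite_lt_eq_prod_Ioi, prod_ite_lt_eq_prod_Ioi]
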